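/- arXiv:2002.01152 — 2 statements merged into one kernel-verified Lean document; each statement's English description precedes it below -/
import Mathlib

section
/- Let A be a commutative ring, let G be a group acting on A by ring automorphisms, and call a G-stable ideal p 'G-prime' if for all G-stable ideals a, b with a*b ⊆ p one has a ⊆ p or b ⊆ p. If c is a finitely generated G-stable ideal of A and p is maximal (with respect to inclusion) among G-stable ideals containing no power c^n of c, then p is G-prime. -/
/-- An ideal is `G`-stable if it is carried into itself by every element of `G`. -/
def IsGStable {A : Type*} [CommRing A] (G : Type*) [Group G] [MulSemiringAction G A]
    (I : Ideal A) : Prop :=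
  ∀ (g : G), ∀ x ∈ I, g • x ∈ I

/-- A `G`-stable ideal `p` is `G`-prime if for all `G`-stable ideals `a`, `b` with
`a * b ⊆ p` one has `a ⊆ p` or `b ⊆ p`. -/
def IsGPrime {A : Type*} [CommRing A] (G : Type*) [Group G] [MulSemiringAction G A]
    (p : Ideal A) : Prop :=
  IsGStable G p ∧ ∀ a b : Ideal A, IsGStable G a → IsGStable G b → a * b ≤ p →
    a ≤ p ∨ b ≤ p

/-! If neither `a` nor `b` lies in `p`, maximality of `p` forces powers `c ^ m ≤ p ⊔ a` and
`c ^ n ≤ p ⊔ b`; then `c ^ (m + n) ≤ (p ⊔ a) * (p ⊔ b) ≤ p + a * b ≤ p`, a contradiction. -/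

theorem IsGStable.sup {A G : Type*} [CommRing A] [Group G] [MulSemiringAction G A]
    {I J : Ideal A} (hI : IsGStable G I) (hJ : IsGStable G J) : IsGStable G (I ⊔ J) := by
  intro g x hx
  obtain ⟨y, hy, z, hz, rfl⟩ := Submodule.mem_sup.mp hx
  rw [smul_add]
  exact add_mem (Ideal.mem_sup_left (hI g y hy)) (Ideal.mem_sup_right (hJ g z hz))

theorem Ideal.sup_mul_sup_le_of_mul_le {R : Type*} [CommSemiring R] {p a b : Ideal R}
    (hab : a * b ≤ p) : (p ⊔ a) * (p ⊔ b) ≤ p := by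
  rw [Ideal.sup_mul, Ideal.mul_sup, Ideal.mul_sup]
  exact sup_le (sup_le Ideal.mul_le_left Ideal.mul_le_left)
    (sup_le Ideal.mul_le_right hab)

theorem Ideal.exists_pow_le_sup_of_isMaximal_avoiding {A G : Type*} [CommRing A] [Group G]
    [MulSemiringAction G A] {c p q : Ideal A} (hpst : IsGStable G p) (hqst : IsGStable G q)
    (hmax : ∀ r : Ideal A, IsGStable G r → (∀ n : ℕ, 1 ≤ n → ¬ c ^ n ≤ r) → p ≤ r → r = p)
    (hqp : ¬ q ≤ p) : ∃ n, 1 ≤ n ∧ c ^ n ≤ p ⊔ q := by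
  by_contra! h
  exact hqp (hmax (p ⊔ q) (hpst.sup hqst) h le_sup_left ▸ le_sup_right)

theorem maximal_avoiding_powers_isGPrime_general {A G : Type*} [CommRing A] [Group G]
    [MulSemiringAction G A] (c : Ideal A)
    (p : Ideal A) (hpst : IsGStable G p)
    (hp : ∀ n : ℕ, 1 ≤ n → ¬ c ^ n ≤ p)
    (hmax : ∀ q : Ideal A, IsGStable G q → (∀ n : ℕ, 1 ≤ n → ¬ c ^ n ≤ q) → p ≤ q → q = p) :
    IsGPrime G p := by
  refine ⟨hpst, fun a b hast hbst hab => ?_⟩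
  by_contra! hcon
  obtain ⟨m, hm1, hm⟩ := Ideal.exists_pow_le_sup_of_isMaximal_avoiding hpst hast hmax hcon.1
  obtain ⟨n, -, hn⟩ := Ideal.exists_pow_le_sup_of_isMaximal_avoiding hpst hbst hmax hcon.2
  refine hp (m + n) (hm1.trans (Nat.le_add_right m n)) ?_
  calc c ^ (m + n) = c ^ m * c ^ n := pow_add c m n
    _ ≤ (p ⊔ a) * (p ⊔ b) := Ideal.mul_mono hm hn
    _ ≤ p := Ideal.sup_mul_sup_le_of_mul_le hab

theorem maximal_avoiding_powers_isGPrime {A G : Type*} [CommRing A] [Group G]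
    [MulSemiringAction G A] (c : Ideal A) (hcfg : c.FG) (hcst : IsGStable G c)
    (p : Ideal A) (hpst : IsGStable G p)
    (hp : ∀ n : ℕ, 1 ≤ n → ¬ c ^ n ≤ p)
    (hmax : ∀ q : Ideal A, IsGStable G q → (∀ n : ℕ, 1 ≤ n → ¬ c ^ n ≤ q) → p ≤ q → q = p) :
    IsGPrime G p :=
  maximal_avoiding_powers_isGPrime_general c p hpst hp hmax
end

section
/- Let X be a topological space with a group G acting by homeomorphisms, and suppose X is G-noetherian: every descending chain of closed G-stable subsets stabilizes. Let X^G_pts denote the set of points of X fixed by G, with the subspace topology. Then every closed subset Z of X^G_pts satisfies Z = closure_X(Z) ∩ X^G_pts, and X^G_pts is a noetherian topological space. -/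
open Pointwise TopologicalSpace Topology

/-! A closed subset `Z` of the fixed-point set is cut out of the fixed points by the closed
`G`-stable set `⋂ g, g • closure Z`, since fixed points lie in `g • S` exactly when they lie in
`S`. Hence `Z ↦ ⋂ g, g • closure Z` strictly embeds the closed subsets of the fixed-point set
into the closed `G`-stable subsets of `X`, and the descending chain condition pulls back. -/

theorem wellFoundedLT_subtype_of_antitone_chain {α : Type*} [PartialOrder α] {P : α → Prop}
    (h : ∀ f : ℕ → α, (∀ n, P (f n)) → (∀ n, f (n + 1) ≤ f n) → ∃ N, ∀ n ≥ N, f n = f N) :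
    WellFoundedLT {a // P a} := by
  refine wellFoundedGT_iff_monotone_chain_condition (α := {a // P a}ᵒᵈ) |>.mpr fun a => ?_
  obtain ⟨N, hN⟩ := h (fun n => (OrderDual.ofDual (a n)).1) (fun n => (OrderDual.ofDual (a n)).2)
    (fun n => a.monotone n.le_succ)
  exact ⟨N, fun m hm => congrArg OrderDual.toDual (Subtype.ext (hN m hm).symm)⟩

namespace MulAction

variable (G : Type*) {X : Type*} [Group G] [MulAction G X]

def stableCore (S : Set X) : Set X := ⋂ g : G, g • S

variable {G}

theorem smul_stableCore (h : G) (S : Set X) : h • stableCore G S = stableCore G S := by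
  simp_rw [stableCore, Set.smul_set_iInter, smul_smul]
  exact (Equiv.mulLeft h).surjective.iInter_comp (fun g => g • S)

theorem stableCore_mono : Monotone (stableCore G (X := X)) := fun _ _ hST =>
  Set.iInter_mono fun _ => Set.smul_set_mono hST

theorem mem_stableCore_iff_of_mem_fixedPoints {x : X} (hx : x ∈ fixedPoints G X) {S : Set X} :
    x ∈ stableCore G S ↔ x ∈ S := by
  simp only [stableCore, Set.mem_iInter, Set.mem_smul_set_iff_inv_smul_mem, hx _, forall_const]

variable [TopologicalSpace X]

theorem isClosed_stableCore [ContinuousConstSMul G X] {S : Set X} (hS : IsClosed S) :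
    IsClosed (stableCore G S) :=
  isClosed_iInter fun g => hS.smul g

theorem preimage_stableCore_closure_image (Z : Set (fixedPoints G X)) :
    Subtype.val ⁻¹' stableCore G (closure (Subtype.val '' Z)) = closure Z := by
  ext x
  rw [Set.mem_preimage, mem_stableCore_iff_of_mem_fixedPoints x.2,
    IsEmbedding.subtypeVal.closure_eq_preimage_closure_image]
  rfl

theorem strictMono_stableCore_closure_image :
    StrictMono fun Z : Closeds (fixedPoints G X) =>
      stableCore G (closure (Subtype.val '' (Z : Set (fixedPoints G X)))) := by
  refine Monotone.strictMono_of_injective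
    (fun Z W h => stableCore_mono (closure_mono (Set.image_mono h))) fun Z W h => Closeds.ext ?_
  simpa only [preimage_stableCore_closure_image, Z.isClosed.closure_eq, W.isClosed.closure_eq]
    using congrArg ((Subtype.val : fixedPoints G X → X) ⁻¹' ·) h

end MulAction

open MulAction in
/-- If `G` acts on `X` by homeomorphisms and `X` is `G`-noetherian (descending chains of
closed `G`-stable subsets stabilize), then every closed subset `Z` of the fixed-point set
`X^G` is the trace of the closure of `Z` in `X`, and `X^G` is a noetherian space. -/
theorem fixedPoints_noetherian {X G : Type*} [TopologicalSpace X] [Group G]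
    [MulAction G X] (hcont : ∀ g : G, Continuous fun x : X => g • x)
    (hGnoeth : ∀ f : ℕ → Set X,
      (∀ n, IsClosed (f n) ∧ ∀ g : G, g • f n = f n) →
      (∀ n, f (n + 1) ⊆ f n) → ∃ N, ∀ n ≥ N, f n = f N) :
    (∀ Z : Set {x : X // ∀ g : G, g • x = x}, IsClosed Z →
      Z = Subtype.val ⁻¹' (closure (Subtype.val '' Z))) ∧
    TopologicalSpace.NoetherianSpace {x : X // ∀ g : G, g • x = x} := by
  have : ContinuousConstSMul G X := ⟨hcont⟩
  refine ⟨fun Z hZ => by rw [← IsEmbedding.subtypeVal.closure_eq_preimage_closure_image,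
    hZ.closure_eq], ?_⟩
  have := wellFoundedLT_subtype_of_antitone_chain
    (P := fun S : Set X => IsClosed S ∧ ∀ g : G, g • S = S) hGnoeth
  let core (Z : Closeds (fixedPoints G X)) : {S : Set X // IsClosed S ∧ ∀ g : G, g • S = S} :=
    ⟨stableCore G (closure (Subtype.val '' (Z : Set (fixedPoints G X)))),
      isClosed_stableCore isClosed_closure, fun g => smul_stableCore g _⟩
  have hcore : StrictMono core := fun _ _ h => strictMono_stableCore_closure_image h
  exact (noetherianSpace_TFAE _).out 0 1 |>.mpr hcore.wellFoundedLT
end
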